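/- Let D be a weighted digraph on a finite vertex set V, and suppose there are pairwise disjoint vertex sets X_1, Y_1, X_2, Y_2, …, X_t, Y_t ⊆ V such that every X_i and every Y_i is an independent set in D. Let R be a set of arcs of D such that every arc of R joins X_i and Y_i (in either direction) for some i ∈ {1,…,t}, and let w(R) denote the total weight of the arcs in R. Then mac(D) ≥ w(D)/4 + w(R)/4. -/

import Mathlib

open scoped BigOperators Classical

noncomputable section

namespace PaperStmt

variable {V : Type*} [Fintype V]

/-- Total weight of a weighted digraph given by `w : V → V → ℝ`. -/
def totalWeight (w : V → V → ℝ) : ℝ := ∑ u, ∑ v, w u v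

/-- Weight of the dicut `(X, Xᶜ)`. -/
def cutWeight (w : V → V → ℝ) (X : Finset V) : ℝ := ∑ x ∈ X, ∑ y ∈ Xᶜ, w x y

/-- Maximum weight of a directed cut. -/
def mac (w : V → V → ℝ) : ℝ :=
  Finset.univ.sup' ⟨∅, Finset.mem_univ ∅⟩ (fun X : Finset V => cutWeight w X)

/-- `r(v) = w⁺(v) - w⁻(v)`. -/
def rv (w : V → V → ℝ) (v : V) : ℝ := (∑ u, w v u) - (∑ u, w u v)

/-- `r⁺(D) = ∑_{v : r(v) > 0} r(v)`. -/
def rPlus (w : V → V → ℝ) : ℝ :=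
  ∑ v ∈ Finset.univ.filter (fun v => 0 < rv w v), rv w v

lemma sum_single' {A : Type*} [Fintype A] [DecidableEq A] (a : A) (f : Bool → ℝ) :
    ∑ ω : A → Bool, f (ω a) = (2:ℝ) ^ (Fintype.card A - 1) * (f true + f false) := by
  rw [← Equiv.sum_comp (Equiv.funSplitAt a Bool).symm (fun ω => f (ω a))]
  rw [Fintype.sum_prod_type]
  simp only [Equiv.funSplitAt, Equiv.piSplitAt, Equiv.coe_fn_symm_mk, dif_pos]
  simp [Finset.sum_const]
  ring

lemma sum_pair' {A : Type*} [Fintype A] [DecidableEq A] {a b : A} (hab : a ≠ b)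
    (f : Bool → Bool → ℝ) :
    ∑ ω : A → Bool, f (ω a) (ω b) =
      (2:ℝ) ^ (Fintype.card A - 2) *
        (f true true + f true false + f false true + f false false) := by
  rw [← Equiv.sum_comp (Equiv.funSplitAt a Bool).symm (fun ω => f (ω a) (ω b))]
  rw [Fintype.sum_prod_type]
  have step : ∀ x : Bool, ∑ g : {j : A // j ≠ a} → Bool,
      f (((Equiv.funSplitAt a Bool).symm (x, g)) a) (((Equiv.funSplitAt a Bool).symm (x, g)) b)
      = (2:ℝ) ^ (Fintype.card {j : A // j ≠ a} - 1) * (f x true + f x false) := by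
    intro x
    have e1 : ∑ g : {j : A // j ≠ a} → Bool,
        f (((Equiv.funSplitAt a Bool).symm (x, g)) a) (((Equiv.funSplitAt a Bool).symm (x, g)) b)
        = ∑ g : {j : A // j ≠ a} → Bool, f x (g ⟨b, hab.symm⟩) := by
      apply Finset.sum_congr rfl
      intro g _
      congr 1
      · simp [Equiv.funSplitAt, Equiv.piSplitAt]
      · simp [Equiv.funSplitAt, Equiv.piSplitAt, hab.symm]
    rw [e1]
    exact sum_single' (A := {j : A // j ≠ a}) ⟨b, hab.symm⟩ (fun y => f x y)
  rw [Finset.sum_congr rfl (fun x _ => step x)]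
  have hcard : Fintype.card {j : A // j ≠ a} = Fintype.card A - 1 := by
    simp [Fintype.card_subtype_compl]
  have h2 : 2 ≤ Fintype.card A := Fintype.one_lt_card_iff_nontrivial.mpr ⟨a, b, hab⟩
  rw [hcard]
  have h3 : Fintype.card A - 1 - 1 = Fintype.card A - 2 := by omega
  rw [h3]
  simp [Fintype.sum_bool]
  ring

theorem induced_bipartite_lower_bound {V : Type*} [Fintype V] [Nonempty V]
    (w : V → V → ℝ) (hnn : ∀ u v, 0 ≤ w u v) (hdiag : ∀ v, w v v = 0)
    (t : ℕ) (X Y : Fin t → Finset V)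
    (hXX : ∀ i j : Fin t, i ≠ j → Disjoint (X i) (X j))
    (hYY : ∀ i j : Fin t, i ≠ j → Disjoint (Y i) (Y j))
    (hXY : ∀ i j : Fin t, Disjoint (X i) (Y j))
    (hXind : ∀ i : Fin t, ∀ u ∈ X i, ∀ v ∈ X i, w u v = 0)
    (hYind : ∀ i : Fin t, ∀ u ∈ Y i, ∀ v ∈ Y i, w u v = 0)
    (R : Finset (V × V))
    (hR : ∀ a ∈ R, 0 < w a.1 a.2 ∧
      ∃ i : Fin t, (a.1 ∈ X i ∧ a.2 ∈ Y i) ∨ (a.1 ∈ Y i ∧ a.2 ∈ X i)) :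
    totalWeight w / 4 + (∑ a ∈ R, w a.1 a.2) / 4 ≤ mac w := by
  classical
  set A := (Fin t ⊕ V) with hA
  set m := Fintype.card A with hm
  set C := (2:ℝ) ^ m with hC
  have hCpos : (0:ℝ) < C := by positivity
  have hm1 : 1 ≤ m := Fintype.card_pos
  -- labels
  set L : V → A := fun v =>
    if h : ∃ i, v ∈ X i then Sum.inl h.choose
    else if h : ∃ i, v ∈ Y i then Sum.inl h.choose
    else Sum.inr v with hL
  set ε : V → Bool := fun v => decide (∃ i, v ∈ Y i) with hε
  -- basic label facts
  have hnotY : ∀ (i : Fin t) (u : V), u ∈ X i → ¬ ∃ j, u ∈ Y j := by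
    rintro i u hu ⟨j, hj⟩
    exact Finset.disjoint_left.mp (hXY i j) hu hj
  have hLX : ∀ (i : Fin t) (u : V), u ∈ X i → L u = Sum.inl i ∧ ε u = false := by
    intro i u hu
    have hx : ∃ j, u ∈ X j := ⟨i, hu⟩
    have hch : hx.choose = i := by
      by_contra hne
      exact Finset.disjoint_left.mp (hXX _ _ hne) hx.choose_spec hu
    constructor
    · simp only [hL, dif_pos hx, hch]
    · simp only [hε, decide_eq_false_iff_not]
      exact hnotY i u hu
  have hLY : ∀ (i : Fin t) (u : V), u ∈ Y i → L u = Sum.inl i ∧ ε u = true := by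
    intro i u hu
    have hx : ¬ ∃ j, u ∈ X j := by
      rintro ⟨j, hj⟩
      exact Finset.disjoint_left.mp (hXY j i) hj hu
    have hy : ∃ j, u ∈ Y j := ⟨i, hu⟩
    have hch : hy.choose = i := by
      by_contra hne
      exact Finset.disjoint_left.mp (hYY _ _ hne) hy.choose_spec hu
    constructor
    · simp only [hL, dif_neg hx, dif_pos hy, hch]
    · simp only [hε, decide_eq_true_iff]
      exact hy
  have hLr : ∀ (u : V) (i : Fin t), L u = Sum.inl i →
      (u ∈ X i ∧ ε u = false) ∨ (u ∈ Y i ∧ ε u = true) := by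
    intro u i hu
    by_cases hx : ∃ j, u ∈ X j
    · obtain ⟨j, hj⟩ := hx
      have := hLX j u hj
      rw [this.1] at hu
      cases Sum.inl_injective hu
      exact Or.inl ⟨hj, (hLX _ u hj).2⟩
    · by_cases hy : ∃ j, u ∈ Y j
      · obtain ⟨j, hj⟩ := hy
        have := hLY j u hj
        rw [this.1] at hu
        cases Sum.inl_injective hu
        exact Or.inr ⟨hj, (hLY _ u hj).2⟩
      · simp only [hL, dif_neg hx, dif_neg hy] at hu
        exact absurd hu (by simp)
  have hLinr : ∀ (u x : V), L u = Sum.inr x → u = x := by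
    intro u x hu
    by_cases hx : ∃ j, u ∈ X j
    · obtain ⟨j, hj⟩ := hx; rw [(hLX j u hj).1] at hu; exact absurd hu (by simp)
    · by_cases hy : ∃ j, u ∈ Y j
      · obtain ⟨j, hj⟩ := hy; rw [(hLY j u hj).1] at hu; exact absurd hu (by simp)
      · simp only [hL, dif_neg hx, dif_neg hy] at hu
        injection hu
  have hzero : ∀ u v : V, L u = L v → ε u = ε v → w u v = 0 := by
    intro u v hLuv hεuv
    rcases hu' : L u with i | x
    · rw [hu'] at hLuv
      rcases hLr u i hu' with ⟨hux, hεu⟩ | ⟨huy, hεu⟩ <;>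
        rcases hLr v i hLuv.symm with ⟨hvx, hεv⟩ | ⟨hvy, hεv⟩
      · exact hXind i u hux v hvx
      · rw [hεu, hεv] at hεuv; exact absurd hεuv (by simp)
      · rw [hεu, hεv] at hεuv; exact absurd hεuv (by simp)
      · exact hYind i u huy v hvy
    · rw [hu'] at hLuv
      rw [hLinr u x hu', hLinr v x hLuv.symm]
      exact hdiag x
  -- the random cut
  set σ : (A → Bool) → V → Bool := fun ω v => xor (ε v) (ω (L v)) with hσ
  set S : (A → Bool) → Finset V := fun ω => Finset.univ.filter (fun v => σ ω v = true) with hS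
  have stepA : ∀ ω : A → Bool, cutWeight w (S ω) ≤ mac w := fun ω =>
    Finset.le_sup' (fun X : Finset V => cutWeight w X) (Finset.mem_univ (S ω))
  have stepB : ∀ ω : A → Bool, cutWeight w (S ω) =
      ∑ u, ∑ v, (if σ ω u = true ∧ σ ω v = false then w u v else 0) := by
    intro ω
    simp only [cutWeight, hS, Finset.compl_filter, Finset.sum_filter]
    refine Finset.sum_congr rfl fun u _ => ?_
    by_cases h : σ ω u = true
    · simp only [h, if_true, true_and]
      refine Finset.sum_congr rfl fun v _ => ?_
      by_cases h2 : σ ω v = true <;> simp [h2]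
    · simp [h]
  -- the per-pair sums
  have stepC : ∑ ω : A → Bool, cutWeight w (S ω) =
      ∑ u, ∑ v, ∑ ω : A → Bool,
        (if xor (ε u) (ω (L u)) = true ∧ xor (ε v) (ω (L v)) = false then w u v else 0) := by
    rw [Finset.sum_congr rfl fun ω _ => stepB ω]
    rw [Finset.sum_comm]
    refine Finset.sum_congr rfl fun u _ => ?_
    rw [Finset.sum_comm]
  have key : ∀ u v : V,
      C / 4 * (w u v + (if (u, v) ∈ R then w u v else 0)) ≤
        ∑ ω : A → Bool,
          (if xor (ε u) (ω (L u)) = true ∧ xor (ε v) (ω (L v)) = false then w u v else 0) := by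
    intro u v
    by_cases hLuv : L u = L v
    · have Tval : (∑ ω : A → Bool,
          (if xor (ε u) (ω (L u)) = true ∧ xor (ε v) (ω (L v)) = false then w u v else 0))
          = (2:ℝ) ^ (m - 1) *
            ((if xor (ε u) true = true ∧ xor (ε v) true = false then w u v else 0)
              + (if xor (ε u) false = true ∧ xor (ε v) false = false then w u v else 0)) := by
        rw [hLuv]
        exact sum_single' (L v) (fun x => if xor (ε u) x = true ∧ xor (ε v) x = false then w u v else 0)
      rw [Tval]
      by_cases hεuv : ε u = ε v
      · have hw : w u v = 0 := hzero u v hLuv hεuv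
        simp [hw]
      · have hval : ((if xor (ε u) true = true ∧ xor (ε v) true = false then w u v else 0)
              + (if xor (ε u) false = true ∧ xor (ε v) false = false then w u v else 0)) = w u v := by
          cases hu1 : ε u <;> cases hv1 : ε v
          · exact absurd (hu1.trans hv1.symm) hεuv
          · norm_num
          · norm_num
          · exact absurd (hu1.trans hv1.symm) hεuv
        rw [hval]
        have hr : (if (u, v) ∈ R then w u v else 0) ≤ w u v := by
          by_cases h : (u, v) ∈ R <;> simp [h, hnn u v]
        have hpow : C = (2:ℝ) ^ (m - 1) * 2 := by
          rw [hC, ← pow_succ]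
          congr 1
          omega
        nlinarith [pow_nonneg (by norm_num : (0:ℝ) ≤ 2) (m - 1), hnn u v]
    · have hm2 : 2 ≤ m := by
        rw [hm]; exact Fintype.one_lt_card_iff_nontrivial.mpr ⟨L u, L v, hLuv⟩
      have Tval : (∑ ω : A → Bool,
          (if xor (ε u) (ω (L u)) = true ∧ xor (ε v) (ω (L v)) = false then w u v else 0))
          = (2:ℝ) ^ (m - 2) *
            ((if xor (ε u) true = true ∧ xor (ε v) true = false then w u v else 0)
             + (if xor (ε u) true = true ∧ xor (ε v) false = false then w u v else 0)
             + (if xor (ε u) false = true ∧ xor (ε v) true = false then w u v else 0)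
             + (if xor (ε u) false = true ∧ xor (ε v) false = false then w u v else 0)) :=
        sum_pair' hLuv (fun x y => if xor (ε u) x = true ∧ xor (ε v) y = false then w u v else 0)
      rw [Tval]
      have hval : ((if xor (ε u) true = true ∧ xor (ε v) true = false then w u v else 0)
             + (if xor (ε u) true = true ∧ xor (ε v) false = false then w u v else 0)
             + (if xor (ε u) false = true ∧ xor (ε v) true = false then w u v else 0)
             + (if xor (ε u) false = true ∧ xor (ε v) false = false then w u v else 0)) = w u v := by
        cases hu1 : ε u <;> cases hv1 : ε v <;> norm_num
      rw [hval]
      have hRnot : (u, v) ∉ R := by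
        intro hmem
        obtain ⟨-, i, hcase⟩ := hR (u, v) hmem
        rcases hcase with ⟨h1, h2⟩ | ⟨h1, h2⟩
        · exact hLuv ((hLX i u h1).1.trans (hLY i v h2).1.symm)
        · exact hLuv ((hLY i u h1).1.trans (hLX i v h2).1.symm)
      rw [if_neg hRnot, add_zero]
      apply le_of_eq
      have hpow : C = (2:ℝ) ^ (m - 2) * 4 := by
        rw [hC]
        rw [show m = (m - 2) + 2 by omega]
        rw [pow_add]
        norm_num
      rw [hpow]
      ring
  have sumR : ∑ u, ∑ v, (if (u, v) ∈ R then w u v else 0) = ∑ a ∈ R, w a.1 a.2 := by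
    rw [← Fintype.sum_prod_type']
    simp only [Prod.mk.eta]
    rw [Finset.sum_ite_mem, Finset.univ_inter]
  have upper : ∑ ω : A → Bool, cutWeight w (S ω) ≤ C * mac w := by
    calc ∑ ω : A → Bool, cutWeight w (S ω) ≤ ∑ _ω : A → Bool, mac w :=
          Finset.sum_le_sum fun ω _ => stepA ω
      _ = (Fintype.card (A → Bool) : ℝ) * mac w := by
          rw [Finset.sum_const, nsmul_eq_mul, Finset.card_univ]
      _ = C * mac w := by
          rw [Fintype.card_fun, Fintype.card_bool, hC]
          push_cast
          ring
  have lower : C / 4 * (totalWeight w + ∑ a ∈ R, w a.1 a.2) ≤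
      ∑ ω : A → Bool, cutWeight w (S ω) := by
    rw [stepC]
    have e1 : C / 4 * (totalWeight w + ∑ a ∈ R, w a.1 a.2)
        = ∑ u, ∑ v, C / 4 * (w u v + (if (u, v) ∈ R then w u v else 0)) := by
      rw [← sumR, totalWeight]
      rw [← Finset.sum_add_distrib, Finset.mul_sum]
      refine Finset.sum_congr rfl fun u _ => ?_
      rw [← Finset.sum_add_distrib, Finset.mul_sum]
    rw [e1]
    exact Finset.sum_le_sum fun u _ => Finset.sum_le_sum fun v _ => key u v
  have final := le_trans lower upper
  have heq : C * ((totalWeight w + ∑ a ∈ R, w a.1 a.2) / 4)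
      = C / 4 * (totalWeight w + ∑ a ∈ R, w a.1 a.2) := by ring
  have hmain : (totalWeight w + ∑ a ∈ R, w a.1 a.2) / 4 ≤ mac w :=
    (mul_le_mul_iff_right₀ hCpos).mp (heq ▸ final)
  linarith

end PaperStmt
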